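/- Consistency of the scheme (quantitative): there exists a constant C depending only on d such that for every f ∈ C^3(ℝ^d), every T > 0, every γ ∈ (0,1] and every integer n ≥ 1, sup_{(x,t) ∈ ℝ^d × [0,T]} | E[ (u_n(x + n^{-1/2} X_{⌊nt⌋+1}, t) − u_n(x,t)) / n^{-1} ] − (1/2) tr(Σ D²u_n(x,t)) | ≤ C · ‖f‖_{C^3} · E[|X_1|^{2+γ}] · n^{-γ/2}. -/

import Mathlib

open MeasureTheory ProbabilityTheory Filter Topology Set

noncomputable section

abbrev Euc (d : ℕ) : Type := EuclideanSpace ℝ (Fin d)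

/-- The quadratic form `aᵀ S a`. -/
def quadForm {d : ℕ} (S : Matrix (Fin d) (Fin d) ℝ) (a : Euc d) : ℝ :=
  ∑ i, ∑ j, a i * S i j * a j

/-- `ν` is the centered Gaussian measure on `ℝ^d` with covariance matrix `S`:
every linear functional pushes forward to a one-dimensional centered Gaussian with
the appropriate variance. -/
def IsCenteredGaussianMeasure {d : ℕ} (S : Matrix (Fin d) (Fin d) ℝ)
    (ν : Measure (Euc d)) : Prop :=
  IsProbabilityMeasure ν ∧
  ∀ a : Euc d, ν.map (fun x => ∑ i, a i * x i) = gaussianReal 0 (quadForm S a).toNNReal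

/-- The covariance matrix of a random vector `Y`. -/
def covMatrix {d : ℕ} {Ω : Type} [MeasurableSpace Ω] (μ : Measure Ω) (Y : Ω → Euc d) :
    Matrix (Fin d) (Fin d) ℝ :=
  Matrix.of fun i j => ∫ ω, Y ω i * Y ω j ∂μ

/-- The i.i.d., centered, square-integrable hypothesis, with covariance matrix `S`. -/
structure IsIIDCentered {d : ℕ} {Ω : Type} [MeasurableSpace Ω] (μ : Measure Ω)
    (X : ℕ → Ω → Euc d) (S : Matrix (Fin d) (Fin d) ℝ) : Prop where
  meas : ∀ i, Measurable (X i)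
  indep : iIndepFun X μ
  ident : ∀ i, μ.map (X i) = μ.map (X 0)
  sqInt : MemLp (X 0) 2 μ
  centered : ∫ ω, X 0 ω ∂μ = 0
  covEq : covMatrix μ (X 0) = S

/-- Partial sums `S_n = X_1 + ⋯ + X_n`. -/
def pSum {d : ℕ} {Ω : Type} (X : ℕ → Ω → Euc d) (n : ℕ) (ω : Ω) : Euc d :=
  ∑ i ∈ Finset.range n, X i ω

/-- `f ∈ C^k(ℝ^d)`: all derivatives up to order `k` exist and are uniformly bounded. -/
def MemCk {d : ℕ} (k : ℕ) (f : Euc d → ℝ) : Prop :=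
  ContDiff ℝ k f ∧ ∀ i ≤ k, ∃ M, ∀ x, ‖iteratedFDeriv ℝ i f x‖ ≤ M

/-- The `C^k` norm of `f`: the sum of the sup norms of the derivatives of order up to `k`. -/
def ckNorm {d : ℕ} (k : ℕ) (f : Euc d → ℝ) : ℝ :=
  ∑ i ∈ Finset.range (k + 1), ⨆ x, ‖iteratedFDeriv ℝ i f x‖

/-- The Hessian matrix (in space) of `f` at `x`. -/
def hessian {d : ℕ} (f : Euc d → ℝ) (x : Euc d) : Matrix (Fin d) (Fin d) ℝ :=
  Matrix.of fun i j =>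
    iteratedFDeriv ℝ 2 f x ![EuclideanSpace.single i 1, EuclideanSpace.single j 1]

/-- The discrete scheme `u_n(x,t) = E[f(x + S_{⌊nt⌋}/√n)]`. -/
def schemeU {d : ℕ} {Ω : Type} [MeasurableSpace Ω] (μ : Measure Ω) (X : ℕ → Ω → Euc d)
    (f : Euc d → ℝ) (n : ℕ) (x : Euc d) (t : ℝ) : ℝ :=
  ∫ ω, f (x + (Real.sqrt n)⁻¹ • pSum X ⌊(n : ℝ) * t⌋₊ ω) ∂μ

/-- The heat semigroup `u(x,t) = E[f(x + √t ξ)]`, where `ξ ∼ ν`. -/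
def heatU {d : ℕ} (ν : Measure (Euc d)) (f : Euc d → ℝ) (x : Euc d) (t : ℝ) : ℝ :=
  ∫ y, f (x + Real.sqrt t • y) ∂ν

/-- `u` is twice continuously differentiable in space and once continuously differentiable in
time on `ℝ^d × (0,∞)`. -/
def IsC21 {d : ℕ} (u : Euc d → ℝ → ℝ) : Prop :=
  (∀ t > (0:ℝ), ContDiff ℝ 2 (fun x => u x t)) ∧
  (∀ x : Euc d, ContDiffOn ℝ 1 (u x) (Set.Ioi 0))


/-!
`u_n(·, t)` is an average of translates of `f` (by the law of `S_{⌊nt⌋}/√n`), so it inherits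
the bounds on the first three derivatives of `f`. Its second-order Taylor remainder at `x` is
therefore `O(‖h‖³)` for `‖h‖ ≤ 1` and `O(‖h‖²)` for `‖h‖ > 1`, hence `O(‖h‖^(2+γ))` for all `h`.
Taking `h = X/√n` and integrating, the linear term vanishes because `X` is centred, the quadratic
term is `tr(Σ D²u_n)/(2n)`, and the remainder is `O(n^(-1-γ/2) E|X|^(2+γ))`.
-/

open scoped NNReal

section Taylor

variable {E F : Type*} [NormedAddCommGroup E] [NormedSpace ℝ E]
  [NormedAddCommGroup F] [NormedSpace ℝ F] {f : E → F}

def secondOrderRemainder (f : E → F) (x h : E) : F :=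
  f (x + h) - f x - fderiv ℝ f x h - (2:ℝ)⁻¹ • fderiv ℝ (fderiv ℝ f) x h h

theorem norm_sub_sub_fderiv_le {K : ℝ≥0} (hf : Differentiable ℝ f)
    (hK : LipschitzWith K (fderiv ℝ f)) (x h : E) :
    ‖f (x + h) - f x - fderiv ℝ f x h‖ ≤ K * ‖h‖ ^ 2 := by
  have := Convex.norm_image_sub_le_of_norm_hasFDerivWithin_le
    (fun u _ => ((hf u).hasFDerivAt.sub (fderiv ℝ f x).hasFDerivAt).hasFDerivWithinAt)
    (fun u hu => (hK.norm_sub_le u x).trans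
      (mul_le_mul_of_nonneg_left (mem_closedBall_iff_norm.1 hu) K.2))
    (convex_closedBall x ‖h‖) (Metric.mem_closedBall_self (norm_nonneg h))
    (y := x + h) (by simp)
  calc _ = ‖(f (x + h) - fderiv ℝ f x (x + h)) - (f x - fderiv ℝ f x x)‖ := by
        rw [map_add]; congr 1; abel
    _ ≤ K * ‖h‖ * ‖x + h - x‖ := this
    _ = K * ‖h‖ ^ 2 := by rw [add_sub_cancel_left]; ring

theorem norm_secondOrderRemainder_le {K : ℝ≥0} (hf : Differentiable ℝ f)
    (hf' : Differentiable ℝ (fderiv ℝ f)) (hK : LipschitzWith K (fderiv ℝ (fderiv ℝ f)))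
    (x h : E) :
    ‖secondOrderRemainder f x h‖ ≤ K * ‖h‖ ^ 3 := by
  set B := fderiv ℝ (fderiv ℝ f) x
  have hsymm : ∀ v w, B v w = B w v :=
    second_derivative_symmetric (fun u => (hf u).hasFDerivAt) (hf' x).hasFDerivAt
  have hquad : ∀ u, HasFDerivAt (fun u => (2:ℝ)⁻¹ • B (u - x) (u - x)) (B (u - x)) u := by
    intro u
    have hsub := (hasFDerivAt_id (𝕜 := ℝ) u).sub_const x
    refine ((B.hasFDerivAt_of_bilinear hsub hsub).const_smul (2:ℝ)⁻¹).congr_fderiv ?_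
    ext v
    simp only [smul_apply, add_apply, ContinuousLinearMap.precompR_apply,
      ContinuousLinearMap.precompL_apply, ContinuousLinearMap.compL_apply,
      ContinuousLinearMap.comp_id, ContinuousLinearMap.id_apply, id_eq, hsymm v]
    module
  have hderiv_le : ∀ u ∈ Metric.closedBall x ‖h‖,
      ‖fderiv ℝ f u - fderiv ℝ f x - B (u - x)‖ ≤ K * ‖h‖ ^ 2 := by
    intro u hu
    have := norm_sub_sub_fderiv_le hf' hK x (u - x)
    rw [add_sub_cancel] at this
    exact this.trans (by gcongr; exact mem_closedBall_iff_norm.1 hu)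
  have := Convex.norm_image_sub_le_of_norm_hasFDerivWithin_le
    (fun u _ => (((hf u).hasFDerivAt.sub (fderiv ℝ f x).hasFDerivAt).sub
      (hquad u)).hasFDerivWithinAt) hderiv_le
    (convex_closedBall x ‖h‖) (Metric.mem_closedBall_self (norm_nonneg h))
    (y := x + h) (by simp)
  calc _ = ‖(f (x + h) - fderiv ℝ f x (x + h) - (2:ℝ)⁻¹ • B (x + h - x) (x + h - x)) -
        (f x - fderiv ℝ f x x - (2:ℝ)⁻¹ • B (x - x) (x - x))‖ := by
        simp only [secondOrderRemainder, map_add, add_sub_cancel_left, sub_self, map_zero,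
          smul_zero, B]
        congr 1; abel
    _ ≤ K * ‖h‖ ^ 2 * ‖x + h - x‖ := this
    _ = K * ‖h‖ ^ 3 := by rw [add_sub_cancel_left]; ring

theorem norm_secondOrderRemainder_le_rpow {K₁ K₂ : ℝ≥0} {γ : ℝ} (hγ₀ : 0 ≤ γ) (hγ₁ : γ ≤ 1)
    (hf : Differentiable ℝ f) (hf' : Differentiable ℝ (fderiv ℝ f))
    (hK₁ : LipschitzWith K₁ (fderiv ℝ f)) (hK₂ : LipschitzWith K₂ (fderiv ℝ (fderiv ℝ f)))
    (x h : E) :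
    ‖secondOrderRemainder f x h‖ ≤ (2 * K₁ + K₂) * ‖h‖ ^ (2 + γ) := by
  rcases le_or_gt ‖h‖ 1 with hh | hh
  · have hpow : ‖h‖ ^ 3 ≤ ‖h‖ ^ (2 + γ) := by
      rw [← Real.rpow_natCast]
      exact Real.rpow_le_rpow_of_exponent_ge' (norm_nonneg h) hh (by positivity)
        (by norm_num; linarith)
    calc _ ≤ K₂ * ‖h‖ ^ 3 := norm_secondOrderRemainder_le hf hf' hK₂ x h
      _ ≤ K₂ * ‖h‖ ^ (2 + γ) := by gcongr
      _ ≤ _ := by gcongr; linarith [K₁.coe_nonneg]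
  · have hpow : ‖h‖ ^ 2 ≤ ‖h‖ ^ (2 + γ) := by
      rw [← Real.rpow_natCast]
      exact Real.rpow_le_rpow_of_exponent_le hh.le (by norm_num; linarith)
    have hquad : ‖(2:ℝ)⁻¹ • fderiv ℝ (fderiv ℝ f) x h h‖ ≤ K₁ * ‖h‖ ^ 2 := by
      rw [norm_smul, sq, ← mul_assoc]
      calc _ ≤ ‖(2:ℝ)⁻¹‖ * (‖fderiv ℝ (fderiv ℝ f) x‖ * ‖h‖ * ‖h‖) := by
            gcongr; exact (fderiv ℝ (fderiv ℝ f) x).le_opNorm₂ h h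
        _ ≤ 1 * (K₁ * ‖h‖ * ‖h‖) := by
            gcongr <;> [norm_num; exact norm_fderiv_le_of_lipschitz ℝ hK₁]
        _ = _ := one_mul _
    calc _ ≤ ‖f (x + h) - f x - fderiv ℝ f x h‖ + ‖(2:ℝ)⁻¹ • fderiv ℝ (fderiv ℝ f) x h h‖ :=
          norm_sub_le _ _
      _ ≤ K₁ * ‖h‖ ^ 2 + K₁ * ‖h‖ ^ 2 := add_le_add (norm_sub_sub_fderiv_le hf hK₁ x h) hquad
      _ ≤ 2 * K₁ * ‖h‖ ^ (2 + γ) := by linarith [mul_le_mul_of_nonneg_left hpow K₁.coe_nonneg]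
      _ ≤ _ := by gcongr; linarith [K₂.coe_nonneg]

end Taylor

section MeanTranslate

variable {Ω E G : Type*} [MeasurableSpace Ω] {μ : Measure Ω}
  [NormedAddCommGroup E] [NormedAddCommGroup G] {Z : Ω → E} {F : E → G} {M : ℝ}

theorem integrable_comp_const_add [IsFiniteMeasure μ] (hF : Continuous F) (hM : ∀ u, ‖F u‖ ≤ M)
    (hZ : AEStronglyMeasurable Z μ) (y : E) : Integrable (fun ω => F (y + Z ω)) μ :=
  (integrable_const M).mono' (hF.comp_aestronglyMeasurable (hZ.const_add y))
    (ae_of_all _ fun _ => hM _)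

variable [NormedSpace ℝ G]

def meanTranslate (μ : Measure Ω) (Z : Ω → E) (F : E → G) (y : E) : G :=
  ∫ ω, F (y + Z ω) ∂μ

theorem continuous_meanTranslate [IsFiniteMeasure μ] (hF : Continuous F) (hM : ∀ u, ‖F u‖ ≤ M)
    (hZ : AEStronglyMeasurable Z μ) : Continuous (meanTranslate μ Z F) :=
  continuous_of_dominated (fun y => hF.comp_aestronglyMeasurable (hZ.const_add y))
    (fun _ => ae_of_all _ fun _ => hM _) (integrable_const M)
    (ae_of_all _ fun _ => hF.comp (continuous_add_const _))

theorem lipschitzWith_meanTranslate [IsProbabilityMeasure μ] {K : ℝ≥0} (hF : LipschitzWith K F)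
    (hM : ∀ u, ‖F u‖ ≤ M) (hZ : AEStronglyMeasurable Z μ) :
    LipschitzWith K (meanTranslate μ Z F) := by
  refine LipschitzWith.of_dist_le_mul fun u v => ?_
  rw [dist_eq_norm, dist_eq_norm, meanTranslate, meanTranslate,
    ← integral_sub (integrable_comp_const_add hF.continuous hM hZ u)
      (integrable_comp_const_add hF.continuous hM hZ v)]
  simpa using norm_integral_le_of_norm_le_const (μ := μ)
    (ae_of_all _ fun ω => (hF.norm_sub_le (u + Z ω) (v + Z ω)).trans_eq (by simp))

theorem hasFDerivAt_meanTranslate [NormedSpace ℝ E] [IsFiniteMeasure μ] {M' : ℝ}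
    (hF : Differentiable ℝ F) (hF' : Continuous (fderiv ℝ F)) (hM : ∀ u, ‖F u‖ ≤ M)
    (hM' : ∀ u, ‖fderiv ℝ F u‖ ≤ M') (hZ : AEStronglyMeasurable Z μ) (x : E) :
    HasFDerivAt (meanTranslate μ Z F) (meanTranslate μ Z (fderiv ℝ F) x) x :=
  hasFDerivAt_integral_of_dominated_of_fderiv_le (F' := fun y ω => fderiv ℝ F (y + Z ω))
    (Metric.ball_mem_nhds x one_pos)
    (Eventually.of_forall fun y => hF.continuous.comp_aestronglyMeasurable (hZ.const_add y))
    (integrable_comp_const_add hF.continuous hM hZ x)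
    (hF'.comp_aestronglyMeasurable (hZ.const_add x)) (ae_of_all _ fun _ _ _ => hM' _)
    (integrable_const M')
    (ae_of_all _ fun ω y _ => (hasFDerivAt_comp_add_right (Z ω)).2 (hF (y + Z ω)).hasFDerivAt)

end MeanTranslate

section ThreeTimesDifferentiable

variable {E G : Type*} [NormedAddCommGroup E] [NormedSpace ℝ E]
  [NormedAddCommGroup G] [NormedSpace ℝ G] {f : E → G} {M : ℝ≥0}

theorem LipschitzWith.fderiv_fderiv (hf : LipschitzWith M (iteratedFDeriv ℝ 2 f)) :
    LipschitzWith M (fderiv ℝ (fderiv ℝ f)) := by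
  refine LipschitzWith.of_dist_le_mul fun u v => ?_
  rw [dist_eq_norm, dist_eq_norm]
  refine ContinuousLinearMap.opNorm_le_bound₂ _ (by positivity) fun a b => ?_
  have := ((iteratedFDeriv ℝ 2 f u - iteratedFDeriv ℝ 2 f v).le_opNorm ![a, b]).trans
    (mul_le_mul_of_nonneg_right (hf.norm_sub_le u v) (by positivity))
  simpa [iteratedFDeriv_two_apply, Fin.prod_univ_two, mul_assoc] using this

theorem norm_secondOrderRemainder_meanTranslate_le {Ω : Type*} [MeasurableSpace Ω]
    {μ : Measure Ω} [IsProbabilityMeasure μ] {Z : Ω → E} {γ : ℝ} (hf : ContDiff ℝ 3 f)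
    (hM : ∀ i ≤ 3, ∀ u, ‖iteratedFDeriv ℝ i f u‖ ≤ M) (hZ : AEStronglyMeasurable Z μ)
    (hγ₀ : 0 ≤ γ) (hγ₁ : γ ≤ 1) (x h : E) :
    ‖secondOrderRemainder (meanTranslate μ Z f) x h‖ ≤ 3 * M * ‖h‖ ^ (2 + γ) := by
  have hf₁ : Differentiable ℝ f := hf.differentiable (by norm_num)
  have hf₂ : Differentiable ℝ (fderiv ℝ f) :=
    (hf.fderiv_right (m := 2) (by norm_num)).differentiable (by norm_num)
  have hf₁c : Continuous (fderiv ℝ f) := hf.continuous_fderiv (by norm_num)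
  have hf₂c : Continuous (fderiv ℝ (fderiv ℝ f)) :=
    (hf.fderiv_right (m := 2) (by norm_num)).continuous_fderiv (by norm_num)
  have hM₀ : ∀ u, ‖f u‖ ≤ M := fun u => by simpa using hM 0 (by norm_num) u
  have hM₁ : ∀ u, ‖fderiv ℝ f u‖ ≤ M := fun u => by
    simpa [norm_iteratedFDeriv_one] using hM 1 (by norm_num) u
  have hM₂ : ∀ u, ‖fderiv ℝ (fderiv ℝ f) u‖ ≤ M := fun u => by
    simpa [← norm_iteratedFDeriv_fderiv, norm_iteratedFDeriv_one] using hM 2 (by norm_num) u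
  have hlip₁ : LipschitzWith M (fderiv ℝ f) :=
    lipschitzWith_of_nnnorm_fderiv_le hf₂ fun u => by exact_mod_cast hM₂ u
  have hlip₂ : LipschitzWith M (fderiv ℝ (fderiv ℝ f)) :=
    LipschitzWith.fderiv_fderiv <| lipschitzWith_of_nnnorm_fderiv_le
      (hf.differentiable_iteratedFDeriv (by norm_num)) fun u => by
        rw [← NNReal.coe_le_coe, coe_nnnorm, norm_fderiv_iteratedFDeriv]
        exact hM 3 le_rfl u
  have hg₁ := hasFDerivAt_meanTranslate (μ := μ) hf₁ hf₁c hM₀ hM₁ hZ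
  have hg₂ := hasFDerivAt_meanTranslate (μ := μ) hf₂ hf₂c hM₁ hM₂ hZ
  have hfderiv₁ : fderiv ℝ (meanTranslate μ Z f) = meanTranslate μ Z (fderiv ℝ f) :=
    funext fun y => (hg₁ y).fderiv
  have hfderiv₂ : fderiv ℝ (fderiv ℝ (meanTranslate μ Z f)) =
      meanTranslate μ Z (fderiv ℝ (fderiv ℝ f)) := by
    rw [hfderiv₁]; exact funext fun y => (hg₂ y).fderiv
  have := norm_secondOrderRemainder_le_rpow hγ₀ hγ₁ (fun y => (hg₁ y).differentiableAt)
    (hfderiv₁ ▸ fun y => (hg₂ y).differentiableAt)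
    (hfderiv₁ ▸ lipschitzWith_meanTranslate hlip₁ hM₁ hZ)
    (hfderiv₂ ▸ lipschitzWith_meanTranslate hlip₂ hM₂ hZ) x h
  linarith

end ThreeTimesDifferentiable

section Consistency

variable {d : ℕ} {Ω : Type} [MeasurableSpace Ω] {μ : Measure Ω} {Y : Ω → Euc d}

theorem bilin_apply_eq_sum (B : Euc d →L[ℝ] Euc d →L[ℝ] ℝ) (u v : Euc d) :
    B u v = ∑ i, ∑ j, u i * v j * B (EuclideanSpace.single i 1) (EuclideanSpace.single j 1) := by
  conv_lhs => rw [← (EuclideanSpace.basisFun (Fin d) ℝ).sum_repr u,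
    ← (EuclideanSpace.basisFun (Fin d) ℝ).sum_repr v]
  simp only [map_sum, map_smul, sum_apply, smul_apply,
    EuclideanSpace.basisFun_repr, EuclideanSpace.basisFun_apply, smul_eq_mul, Finset.mul_sum]
  rw [Finset.sum_comm]
  simp only [mul_assoc, mul_left_comm]

theorem MeasureTheory.MemLp.integrable_coord_mul (hY : MemLp Y 2 μ) (i j : Fin d) :
    Integrable (fun ω => Y ω i * Y ω j) μ :=
  ((EuclideanSpace.proj (𝕜 := ℝ) i).comp_memLp' hY).integrable_mul
    ((EuclideanSpace.proj (𝕜 := ℝ) j).comp_memLp' hY)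

theorem integrable_bilin_apply (hY : MemLp Y 2 μ) (B : Euc d →L[ℝ] Euc d →L[ℝ] ℝ) :
    Integrable (fun ω => B (Y ω) (Y ω)) μ := by
  rw [funext fun ω => bilin_apply_eq_sum B (Y ω) (Y ω)]
  exact integrable_finsetSum _ fun i _ => integrable_finsetSum _ fun j _ =>
    (hY.integrable_coord_mul i j).mul_const _

theorem integral_bilin_apply_eq_trace (hY : MemLp Y 2 μ) (B : Euc d →L[ℝ] Euc d →L[ℝ] ℝ) :
    ∫ ω, B (Y ω) (Y ω) ∂μ = Matrix.trace
      (Matrix.of (fun i j => B (EuclideanSpace.single i 1) (EuclideanSpace.single j 1)) *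
        covMatrix μ Y) := by
  rw [funext fun ω => bilin_apply_eq_sum B (Y ω) (Y ω), integral_finsetSum _ fun i _ =>
    integrable_finsetSum _ fun j _ => (hY.integrable_coord_mul i j).mul_const _]
  refine Finset.sum_congr rfl fun i _ => ?_
  rw [integral_finsetSum _ fun j _ => (hY.integrable_coord_mul i j).mul_const _]
  refine Finset.sum_congr rfl fun j _ => ?_
  simp only [covMatrix, Matrix.of_apply, integral_mul_const]
  rw [mul_comm, funext fun ω => mul_comm (Y ω j) (Y ω i)]

theorem hessian_eq_fderiv_fderiv (g : Euc d → ℝ) (x : Euc d) :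
    hessian g x = Matrix.of fun i j =>
      fderiv ℝ (fderiv ℝ g) x (EuclideanSpace.single i 1) (EuclideanSpace.single j 1) := by
  ext i j
  simp [hessian, iteratedFDeriv_two_apply]

theorem abs_integral_sub_sub_trace_hessian_le [IsProbabilityMeasure μ] {g : Euc d → ℝ}
    (hg : Continuous g) {x : Euc d} {K p : ℝ}
    (hR : ∀ h, |secondOrderRemainder g x h| ≤ K * ‖h‖ ^ p) (hY : MemLp Y 2 μ)
    (hY₀ : ∫ ω, Y ω ∂μ = 0) (hYp : Integrable (fun ω => ‖Y ω‖ ^ p) μ) :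
    |∫ ω, (g (x + Y ω) - g x) ∂μ - Matrix.trace (covMatrix μ Y * hessian g x) / 2| ≤
      K * ∫ ω, ‖Y ω‖ ^ p ∂μ := by
  set L := fderiv ℝ g x
  set B := fderiv ℝ (fderiv ℝ g) x
  have hY₁ : Integrable Y μ := hY.integrable one_le_two
  have hL : Integrable (fun ω => L (Y ω)) μ := L.integrable_comp hY₁
  have hB : Integrable (fun ω => 2⁻¹ * B (Y ω) (Y ω)) μ :=
    (integrable_bilin_apply hY B).const_mul _
  have hRint : Integrable (fun ω => secondOrderRemainder g x (Y ω)) μ :=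
    (hYp.const_mul K).mono' ((by unfold secondOrderRemainder; fun_prop :
      Continuous (secondOrderRemainder g x)).comp_aestronglyMeasurable hY.1)
      (ae_of_all _ fun ω => hR _)
  have hsplit : ∫ ω, (g (x + Y ω) - g x) ∂μ =
      ∫ ω, (L (Y ω) + 2⁻¹ * B (Y ω) (Y ω) + secondOrderRemainder g x (Y ω)) ∂μ := by
    congr 1; ext ω; simp only [secondOrderRemainder, smul_eq_mul, L, B]; ring
  have hmean : ∫ ω, L (Y ω) ∂μ = 0 := by rw [L.integral_comp_comm hY₁, hY₀, map_zero]
  rw [hsplit, integral_add (f := fun ω => L (Y ω) + 2⁻¹ * B (Y ω) (Y ω)) (hL.add hB) hRint,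
    integral_add hL hB, hmean, integral_const_mul,
    integral_bilin_apply_eq_trace hY, hessian_eq_fderiv_fderiv, Matrix.trace_mul_comm, zero_add,
    show ∀ a b : ℝ, 2⁻¹ * a + b - a / 2 = b from fun a b => by ring, ← integral_const_mul]
  exact norm_integral_le_of_norm_le (f := fun ω => secondOrderRemainder g x (Y ω))
    (hYp.const_mul K) (ae_of_all _ fun ω => hR (Y ω))

theorem covMatrix_smul (c : ℝ) (Y : Ω → Euc d) :
    covMatrix μ (fun ω => c • Y ω) = c ^ 2 • covMatrix μ Y := by
  ext i j
  simp only [covMatrix, Matrix.of_apply, Matrix.smul_apply, PiLp.smul_apply, smul_eq_mul,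
    ← integral_const_mul]
  congr 1; ext ω; ring

theorem ProbabilityTheory.IdentDistrib.covMatrix_eq {Y' : Ω → Euc d}
    (h : IdentDistrib Y Y' μ μ) : covMatrix μ Y = covMatrix μ Y' := by
  ext i j
  exact (h.comp (by fun_prop : Continuous fun y : Euc d => y i * y j).measurable).integral_eq

theorem mul_inv_sqrt_rpow_two_add {x : ℝ} (hx : 0 < x) (γ : ℝ) :
    x * (√x)⁻¹ ^ (2 + γ) = x ^ (-(γ / 2)) := by
  rw [Real.sqrt_eq_rpow, ← Real.rpow_neg hx.le, ← Real.rpow_mul hx.le]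
  conv_lhs => arg 1; rw [← Real.rpow_one x]
  rw [← Real.rpow_add hx]
  ring_nf

theorem abs_mul_integral_sub_sub_trace_hessian_le [IsProbabilityMeasure μ] {g : Euc d → ℝ}
    (hg : Continuous g) {x : Euc d} {K γ : ℝ}
    (hR : ∀ h, |secondOrderRemainder g x h| ≤ K * ‖h‖ ^ (2 + γ)) (hY : MemLp Y 2 μ)
    (hY₀ : ∫ ω, Y ω ∂μ = 0) (hYp : Integrable (fun ω => ‖Y ω‖ ^ (2 + γ)) μ) {n : ℕ}
    (hn : 0 < n) :
    |(n : ℝ) * ∫ ω, (g (x + (√(n : ℝ))⁻¹ • Y ω) - g x) ∂μ -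
        Matrix.trace (covMatrix μ Y * hessian g x) / 2| ≤
      K * (∫ ω, ‖Y ω‖ ^ (2 + γ) ∂μ) * (n : ℝ) ^ (-(γ / 2)) := by
  have hn' : (0 : ℝ) < n := by exact_mod_cast hn
  set c : ℝ := (√(n : ℝ))⁻¹
  have hc : 0 ≤ c := by positivity
  have hc₂ : c ^ 2 = (n : ℝ)⁻¹ := by simp [c, inv_pow, Real.sq_sqrt hn'.le]
  have hnorm : ∀ ω, ‖c • Y ω‖ ^ (2 + γ) = c ^ (2 + γ) * ‖Y ω‖ ^ (2 + γ) := fun ω => by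
    rw [norm_smul, Real.norm_of_nonneg hc, Real.mul_rpow hc (norm_nonneg _)]
  have key := abs_integral_sub_sub_trace_hessian_le (Y := fun ω => c • Y ω) hg hR
    (hY.const_smul c) (by rw [integral_smul, hY₀, smul_zero])
    (by simpa only [hnorm] using hYp.const_mul (c ^ (2 + γ)))
  simp only [hnorm, integral_const_mul, covMatrix_smul, Matrix.smul_mul, Matrix.trace_smul,
    hc₂, smul_eq_mul] at key
  calc _ = (n : ℝ) * |∫ ω, (g (x + c • Y ω) - g x) ∂μ -
        (n : ℝ)⁻¹ * Matrix.trace (covMatrix μ Y * hessian g x) / 2| := by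
        rw [← abs_of_pos hn', ← abs_mul, abs_of_pos hn']
        congr 1
        field_simp
    _ ≤ (n : ℝ) * (K * (c ^ (2 + γ) * ∫ ω, ‖Y ω‖ ^ (2 + γ) ∂μ)) := by gcongr
    _ = K * (∫ ω, ‖Y ω‖ ^ (2 + γ) ∂μ) * ((n : ℝ) * c ^ (2 + γ)) := by ring
    _ = _ := by rw [mul_inv_sqrt_rpow_two_add hn']

end Consistency

theorem ckNorm_nonneg {d : ℕ} (k : ℕ) (f : Euc d → ℝ) : 0 ≤ ckNorm k f :=
  Finset.sum_nonneg fun _ _ => Real.iSup_nonneg fun _ => norm_nonneg _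

theorem MemCk.norm_iteratedFDeriv_le_ckNorm {d k i : ℕ} {f : Euc d → ℝ} (hf : MemCk k f)
    (hi : i ≤ k) (x : Euc d) : ‖iteratedFDeriv ℝ i f x‖ ≤ ckNorm k f := by
  obtain ⟨C, hC⟩ := hf.2 i hi
  calc _ ≤ ⨆ y, ‖iteratedFDeriv ℝ i f y‖ := le_ciSup ⟨C, Set.forall_mem_range.2 hC⟩ x
    _ ≤ ckNorm k f := Finset.single_le_sum (f := fun i => ⨆ y, ‖iteratedFDeriv ℝ i f y‖)
        (fun _ _ => Real.iSup_nonneg fun _ => norm_nonneg _)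
        (Finset.mem_range.2 (Nat.lt_succ_of_le hi))

theorem scheme_consistency_quantitative_general
    {d : ℕ} {Ω : Type} [MeasurableSpace Ω] (μ : Measure Ω)
    [IsProbabilityMeasure μ] (X : ℕ → Ω → Euc d) (S : Matrix (Fin d) (Fin d) ℝ)
    (hX : IsIIDCentered μ X S) :
    ∃ C : ℝ, 0 < C ∧ ∀ f : Euc d → ℝ, MemCk 3 f → ∀ T > (0:ℝ), ∀ γ ∈ Set.Ioc (0:ℝ) 1,
      ∀ n : ℕ, 1 ≤ n → Integrable (fun ω => ‖X 0 ω‖ ^ ((2:ℝ) + γ)) μ →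
      ∀ x : Euc d, ∀ t ∈ Set.Icc (0:ℝ) T,
      |(n : ℝ) * ∫ ω, (schemeU μ X f n (x + (Real.sqrt n)⁻¹ • X ⌊(n : ℝ) * t⌋₊ ω) t -
            schemeU μ X f n x t) ∂μ -
          Matrix.trace (S * hessian (fun y => schemeU μ X f n y t) x) / 2| ≤
        C * ckNorm 3 f * (∫ ω, ‖X 0 ω‖ ^ ((2:ℝ) + γ) ∂μ) * (n : ℝ) ^ (-(γ / 2)) := by
  refine ⟨3, by norm_num, fun f hf T _ γ hγ n hn hmom x t _ => ?_⟩
  set m := ⌊(n : ℝ) * t⌋₊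
  set Z : Ω → Euc d := fun ω => (√(n : ℝ))⁻¹ • pSum X m ω
  have hsum : Measurable (pSum X m) := Finset.measurable_sum _ fun i _ => hX.meas i
  have hZ : AEStronglyMeasurable Z μ := (hsum.const_smul (√(n : ℝ))⁻¹).aestronglyMeasurable
  have hident : IdentDistrib (X m) (X 0) μ μ :=
    ⟨(hX.meas m).aemeasurable, (hX.meas 0).aemeasurable, hX.ident m⟩
  have hmoment := hident.comp (by fun_prop : Measurable fun y : Euc d => ‖y‖ ^ (2 + γ))
  have hmoment_eq : ∫ ω, ‖X m ω‖ ^ (2 + γ) ∂μ = ∫ ω, ‖X 0 ω‖ ^ (2 + γ) ∂μ :=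
    hmoment.integral_eq
  have hbound : ∀ i ≤ 3, ∀ u, ‖iteratedFDeriv ℝ i f u‖ ≤ (ckNorm 3 f).toNNReal := fun i hi u =>
    (hf.norm_iteratedFDeriv_le_ckNorm hi u).trans (Real.le_coe_toNNReal _)
  have hf₀ : ∀ u, ‖f u‖ ≤ ckNorm 3 f := fun u => by
    simpa using hf.norm_iteratedFDeriv_le_ckNorm (Nat.zero_le 3) u
  have hR := norm_secondOrderRemainder_meanTranslate_le hf.1 hbound hZ hγ.1.le hγ.2 x
  have := abs_mul_integral_sub_sub_trace_hessian_le
    (continuous_meanTranslate hf.1.continuous hf₀ hZ)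
    (fun h => by simpa [Real.coe_toNNReal _ (ckNorm_nonneg 3 f)] using hR h)
    (hident.memLp_iff.2 hX.sqInt) (by rw [hident.integral_eq, hX.centered])
    (hmoment.integrable_iff.2 hmom) hn
  rw [hident.covMatrix_eq, hX.covEq, hmoment_eq] at this
  exact this

/-- **Consistency of the scheme (quantitative)**: there is a constant `C` depending only on
`d` such that for every `f ∈ C³(ℝ^d)`, every `T > 0`, every `γ ∈ (0,1]` (with finite `2+γ`
moment) and every `n ≥ 1`, for all `(x,t) ∈ ℝ^d × [0,T]`,
`|E[(u_n(x + n^{-1/2} X_{⌊nt⌋+1}, t) − u_n(x,t))/n^{-1}] − ½ tr(Σ D²u_n(x,t))|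
  ≤ C ‖f‖_{C³} E[|X₁|^{2+γ}] n^{-γ/2}`. -/
theorem scheme_consistency_quantitative
    {d : ℕ} (hd : 1 ≤ d) {Ω : Type} [MeasurableSpace Ω] (μ : Measure Ω)
    [IsProbabilityMeasure μ] (X : ℕ → Ω → Euc d) (S : Matrix (Fin d) (Fin d) ℝ)
    (hX : IsIIDCentered μ X S) :
    ∃ C : ℝ, 0 < C ∧ ∀ f : Euc d → ℝ, MemCk 3 f → ∀ T > (0:ℝ), ∀ γ ∈ Set.Ioc (0:ℝ) 1,
      ∀ n : ℕ, 1 ≤ n → Integrable (fun ω => ‖X 0 ω‖ ^ ((2:ℝ) + γ)) μ →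
      ∀ x : Euc d, ∀ t ∈ Set.Icc (0:ℝ) T,
      |(n : ℝ) * ∫ ω, (schemeU μ X f n (x + (Real.sqrt n)⁻¹ • X ⌊(n : ℝ) * t⌋₊ ω) t -
            schemeU μ X f n x t) ∂μ -
          Matrix.trace (S * hessian (fun y => schemeU μ X f n y t) x) / 2| ≤
        C * ckNorm 3 f * (∫ ω, ‖X 0 ω‖ ^ ((2:ℝ) + γ) ∂μ) * (n : ℝ) ^ (-(γ / 2)) :=
  scheme_consistency_quantitative_general μ X S hX

end
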